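/- arXiv:1808.07226 — 3 statements merged into one kernel-verified Lean document; each statement's English description precedes it below -/
import Mathlib

section
/- For any Ising model with interaction matrix J on n vertices, the difference between the free energy and the mean-field variational free energy satisfies F − F* ≤ 3 n^{2/3} ‖J‖_F^{2/3}. -/
open Finset

noncomputable section
open scoped Classical

/-- The ±1 value of a Boolean spin. -/
def spin (b : Bool) : ℝ := if b then 1 else -1

/-- The Ising Hamiltonian `∑_{i<j} J i j * x i * x j`. -/
def ham {n : ℕ} (J : Matrix (Fin n) (Fin n) ℝ) (x : Fin n → Bool) : ℝ :=
  ∑ i : Fin n, ∑ j : Fin n, if i < j then J i j * spin (x i) * spin (x j) else 0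

/-- The partition function `Z = ∑_x exp(∑_{i<j} J i j x_i x_j)`. -/
def partZ {n : ℕ} (J : Matrix (Fin n) (Fin n) ℝ) : ℝ :=
  ∑ x : Fin n → Bool, Real.exp (ham J x)

/-- The free energy `F = log Z`. -/
def freeEnergy {n : ℕ} (J : Matrix (Fin n) (Fin n) ℝ) : ℝ := Real.log (partZ J)

/-- Binary entropy (natural log). -/
def binEnt (p : ℝ) : ℝ := -(p * Real.log p) - (1 - p) * Real.log (1 - p)

/-- The mean-field objective `∑_{i<j} J i j x_i x_j + ∑_i H((x_i+1)/2)`. -/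
def mfObj {n : ℕ} (J : Matrix (Fin n) (Fin n) ℝ) (x : Fin n → ℝ) : ℝ :=
  (∑ i : Fin n, ∑ j : Fin n, if i < j then J i j * x i * x j else 0)
    + ∑ i : Fin n, binEnt ((x i + 1) / 2)

/-- The mean-field variational free energy `F* = max_{x ∈ [-1,1]^n} mfObj J x`. -/
def mfFreeEnergy {n : ℕ} (J : Matrix (Fin n) (Fin n) ℝ) : ℝ :=
  sSup {v | ∃ x : Fin n → ℝ, (∀ i, -1 ≤ x i ∧ x i ≤ 1) ∧ v = mfObj J x}

/-- The Frobenius norm `‖J‖_F = sqrt(∑_{i,j} J_{ij}²)`. -/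
def frob {n : ℕ} (J : Matrix (Fin n) (Fin n) ℝ) : ℝ :=
  Real.sqrt (∑ i : Fin n, ∑ j : Fin n, (J i j) ^ 2)

/-!
Pinning. Partition the configurations according to the values of `t` spins. Choosing the cell
costs at most `t log 2` of entropy, and inside a cell `γ` the Gibbs variational identity and the
subadditivity of entropy give `log Z_γ ≤ mfObj J m_γ + ∑_{i<j} J_ij Cov_γ(x_i, x_j)`, where `m_γ`
are the magnetizations of the cell. By Cauchy–Schwarz and Jensen, `F ≤ t log 2 + F* + ‖J‖_F √Q`,
where `Q` is the average over the cells of `∑_{i,j} Cov_γ(x_i, x_j)²`.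
Pinning one more spin `x_j` lowers the total conditional variance `∑_i Var(x_i | cell)`, which is
at most `n`, by `∑_i Cov(x_i, x_j)²`; for the best `j` this is at least `Q / n`. Hence some
pinning of `t < k` spins has `Q ≤ n² / k`, and `k = ⌊(n ‖J‖_F)^{2/3}⌋ + 1` gives the bound.
-/

open Real

theorem spin_mul_self (b : Bool) : spin b * spin b = 1 := by
  cases b <;> norm_num [spin]

theorem abs_spin_le_one (b : Bool) : |spin b| ≤ 1 := by
  cases b <;> norm_num [spin]

section Inequalities

variable {ι : Type*} [Fintype ι]

theorem sum_mul_log_add_sum_negMulLog_le {p a : ι → ℝ} (hp : ∀ i, 0 ≤ p i) (hp1 : ∑ i, p i = 1)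
    (ha : ∀ i, 0 ≤ a i) (hpa : ∀ i, p i ≠ 0 → a i ≠ 0) :
    ∑ i, p i * log (a i) + ∑ i, negMulLog (p i) ≤ log (∑ i, a i) := by
  obtain ⟨i₀, hi₀⟩ : ∃ i, p i ≠ 0 := by
    by_contra! h
    simp [h] at hp1
  set A := ∑ i, a i
  have hA : 0 < A := ((ha i₀).lt_of_ne' (hpa i₀ hi₀)).trans_le
    (single_le_sum (fun i _ => ha i) (mem_univ i₀))
  -- termwise `log x ≤ x - 1` at `x = a i / (A * p i)`
  have key : ∀ i, p i * log (a i) + negMulLog (p i) ≤ a i / A - p i + p i * log A := by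
    intro i
    rcases (hp i).eq_or_lt with h | h
    · rw [← h]
      simpa using div_nonneg (ha i) hA.le
    · have hai : 0 < a i := (ha i).lt_of_ne' (hpa i h.ne')
      have hlog := log_le_sub_one_of_pos (show 0 < a i / (A * p i) by positivity)
      rw [log_div hai.ne' (by positivity), log_mul hA.ne' h.ne'] at hlog
      have hlin : p i * (a i / (A * p i) - 1) = a i / A - p i := by field_simp
      rw [negMulLog]
      nlinarith [mul_le_mul_of_nonneg_left hlog h.le]
  calc ∑ i, p i * log (a i) + ∑ i, negMulLog (p i)
      ≤ ∑ i, (a i / A - p i + p i * log A) := by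
        rw [← sum_add_distrib]
        exact sum_le_sum fun i _ => key i
    _ = log A := by
        rw [sum_add_distrib, sum_sub_distrib, ← sum_div, ← sum_mul, hp1, div_self hA.ne']
        ring

theorem sum_negMulLog_le_log_card {p : ι → ℝ} (hp : ∀ i, 0 ≤ p i) (hp1 : ∑ i, p i = 1) :
    ∑ i, negMulLog (p i) ≤ log (Fintype.card ι) := by
  simpa using sum_mul_log_add_sum_negMulLog_le hp hp1 (fun _ => zero_le_one) fun _ _ => one_ne_zero

theorem log_sum_eq_sum_mul_log_add_sum_negMulLog {w : ι → ℝ} (hw : ∀ i, 0 ≤ w i)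
    (h : 0 < ∑ i, w i) :
    log (∑ i, w i) = ∑ i, w i / (∑ j, w j) * log (w i) + ∑ i, negMulLog (w i / ∑ j, w j) := by
  set W := ∑ i, w i
  have key : ∀ i, w i / W * log (w i) + negMulLog (w i / W) = w i / W * log W := by
    intro i
    rcases (hw i).eq_or_lt with hi | hi
    · simp [← hi]
    · rw [negMulLog, log_div hi.ne' h.ne']
      ring
  rw [← sum_add_distrib, sum_congr rfl fun i _ => key i, ← sum_mul, ← sum_div, div_self h.ne',
    one_mul]

theorem log_sum_le_log_card_add_sum_mul_log {w : ι → ℝ} (hw : ∀ i, 0 ≤ w i)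
    (h : 0 < ∑ i, w i) :
    log (∑ i, w i) ≤ log (Fintype.card ι) + ∑ i, w i / (∑ j, w j) * log (w i) := by
  have hent := sum_negMulLog_le_log_card (p := fun i => w i / ∑ j, w j)
    (fun i => div_nonneg (hw i) h.le) (by rw [← sum_div, div_self h.ne'])
  rw [log_sum_eq_sum_mul_log_add_sum_negMulLog hw h]
  linarith

theorem sum_negMulLog_le_sum_negMulLog_marginal [DecidableEq ι] {α : Type*} [Fintype α]
    [DecidableEq α] {p : (ι → α) → ℝ} (hp : ∀ x, 0 ≤ p x) (hp1 : ∑ x, p x = 1) :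
    ∑ x, negMulLog (p x) ≤ ∑ i, ∑ a, negMulLog (∑ x, if x i = a then p x else 0) := by
  set r : ι → α → ℝ := fun i a => ∑ x, if x i = a then p x else 0
  have hr : ∀ i a, 0 ≤ r i a := fun i a => sum_nonneg fun x _ => by split_ifs <;> simp [hp x]
  have hr1 : ∀ i, ∑ a, r i a = 1 := fun i => by rw [sum_comm]; simpa using hp1
  have hpr : ∀ x i, p x ≤ r i (x i) := fun x i => by
    simpa using single_le_sum (f := fun y => if y i = x i then p y else 0)
      (fun y _ => by split_ifs <;> simp [hp y]) (mem_univ x)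
  -- compare `p` with the product of its marginals
  have hlog : ∀ x, p x * log (∏ i, r i (x i)) = ∑ i, p x * log (r i (x i)) := fun x => by
    rcases (hp x).eq_or_lt with hx | hx
    · simp [← hx]
    · rw [log_prod fun i _ => ((hx.trans_le (hpr x i))).ne', mul_sum]
  have hmarg : ∀ i, ∑ x, p x * log (r i (x i)) = -∑ a, negMulLog (r i a) := fun i => by
    simp only [negMulLog, neg_mul, sum_neg_distrib, neg_neg, r, sum_mul]
    rw [sum_comm]
    refine sum_congr rfl fun x _ => ?_
    simp [ite_mul]
  have hgibbs := sum_mul_log_add_sum_negMulLog_le hp hp1 (a := fun x => ∏ i, r i (x i))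
    (fun x => prod_nonneg fun i _ => hr i (x i))
    fun x hx => (prod_pos fun i _ => ((hp x).lt_of_ne' hx).trans_le (hpr x i)).ne'
  rw [← Fintype.prod_sum, prod_congr rfl fun i _ => hr1 i, prod_const_one, log_one,
    sum_congr rfl fun x _ => hlog x, sum_comm, sum_congr rfl fun i _ => hmarg i,
    sum_neg_distrib] at hgibbs
  linarith

theorem sum_mul_sqrt_le_sqrt_sum_mul {p q : ι → ℝ} (hp : ∀ i, 0 ≤ p i)
    (hp1 : ∑ i, p i = 1) (hq : ∀ i, 0 ≤ q i) : ∑ i, p i * √(q i) ≤ √(∑ i, p i * q i) := by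
  simpa only [smul_eq_mul] using strictConcaveOn_sqrt.concaveOn.le_map_sum (t := univ)
    (fun i _ => hp i) hp1 (fun i _ => hq i)

end Inequalities

namespace Weighted

variable {Ω Γ ι : Type*} {w f : Ω → ℝ}

def cell (w : Ω → ℝ) (P : Ω → Γ) (γ : Γ) (x : Ω) : ℝ := if P x = γ then w x else 0

theorem cell_nonneg (hw : ∀ x, 0 ≤ w x) (P : Ω → Γ) (γ : Γ) (x : Ω) : 0 ≤ cell w P γ x := by
  unfold cell; split_ifs <;> simp [hw x]

def pin (b : ι → Ω → Bool) {t : ℕ} (s : Fin t → ι) (x : Ω) : Fin t → Bool := fun a => b (s a) x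

theorem pin_cons (b : ι → Ω → Bool) {t : ℕ} (j : ι) (s : Fin t → ι) :
    pin b (Fin.cons j s) = Fin.consEquiv (fun _ => Bool) ∘ fun x => (b j x, pin b s x) :=
  funext fun x => Fin.comp_cons (fun i => b i x) j s

variable [Fintype Ω]

def mass (w : Ω → ℝ) : ℝ := ∑ x, w x

def mean (w f : Ω → ℝ) : ℝ := (∑ x, w x * f x) / mass w

def cov (w f g : Ω → ℝ) : ℝ := mean w (fun x => f x * g x) - mean w f * mean w g

def condVar [Fintype Γ] (w : Ω → ℝ) (P : Ω → Γ) (f : Ω → ℝ) : ℝ :=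
  ∑ γ, mass (cell w P γ) * cov (cell w P γ) f f

theorem mass_nonneg (hw : ∀ x, 0 ≤ w x) : 0 ≤ mass w := sum_nonneg fun x _ => hw x

theorem eq_zero_of_mass_eq_zero (hw : ∀ x, 0 ≤ w x) (h : mass w = 0) (x : Ω) : w x = 0 :=
  (sum_eq_zero_iff_of_nonneg fun x _ => hw x).1 h x (mem_univ x)

theorem mean_eq_sum (w f : Ω → ℝ) : mean w f = ∑ x, w x / mass w * f x := by
  rw [mean, sum_div]
  exact sum_congr rfl fun x _ => by ring

theorem mass_mul_mean (hw : ∀ x, 0 ≤ w x) : mass w * mean w f = ∑ x, w x * f x := by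
  rcases (mass_nonneg hw).eq_or_lt with h | h
  · simp [← h, eq_zero_of_mass_eq_zero hw h.symm]
  · rw [mean, mul_div_cancel₀ _ h.ne']

theorem mass_mul_cov_self (hw : ∀ x, 0 ≤ w x) :
    mass w * cov w f f = ∑ x, w x * (f x * f x) - mass w * mean w f ^ 2 := by
  rcases (mass_nonneg hw).eq_or_lt with h | h
  · simp [← h, eq_zero_of_mass_eq_zero hw h.symm]
  · rw [cov, mul_sub, mass_mul_mean hw]
    ring

theorem mass_mul_cov_self_nonneg (hw : ∀ x, 0 ≤ w x) : 0 ≤ mass w * cov w f f := by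
  have hexp : ∑ x, w x * (f x - mean w f) ^ 2
      = ∑ x, w x * (f x * f x) - 2 * mean w f * ∑ x, w x * f x + mean w f ^ 2 * mass w := by
    simp only [mass, mul_sum, ← sum_sub_distrib, ← sum_add_distrib]
    exact sum_congr rfl fun x _ => by ring
  have h : mass w * cov w f f = ∑ x, w x * (f x - mean w f) ^ 2 := by
    rw [hexp, mass_mul_cov_self hw, ← mass_mul_mean hw (f := f)]
    ring
  exact h ▸ sum_nonneg fun x _ => mul_nonneg (hw x) (sq_nonneg _)

theorem mass_mul_cov_self_le (hw : ∀ x, 0 ≤ w x) (hf : ∀ x, f x * f x = 1) :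
    mass w * cov w f f ≤ mass w := by
  rw [mass_mul_cov_self hw]
  simp only [hf, mul_one]
  rw [show ∑ x, w x = mass w from rfl]
  nlinarith [mass_nonneg hw, sq_nonneg (mean w f)]

theorem abs_mean_le_one (hw : ∀ x, 0 ≤ w x) (hf : ∀ x, |f x| ≤ 1) : |mean w f| ≤ 1 := by
  rcases (mass_nonneg hw).eq_or_lt with h | h
  · simp [mean, ← h]
  · rw [mean, abs_div, abs_of_pos h, div_le_one h]
    calc |∑ x, w x * f x| ≤ ∑ x, |w x * f x| := abs_sum_le_sum_abs _ _
      _ = ∑ x, w x * |f x| := by simp only [abs_mul, abs_of_nonneg (hw _)]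
      _ ≤ ∑ x, w x := sum_le_sum fun x _ => mul_le_of_le_one_right (hw x) (hf x)

theorem sum_mass_cell [Fintype Γ] (P : Ω → Γ) : ∑ γ, mass (cell w P γ) = mass w := by
  simp only [mass, cell]
  rw [sum_comm]
  simp

theorem condVar_nonneg [Fintype Γ] (hw : ∀ x, 0 ≤ w x) (P : Ω → Γ) (f : Ω → ℝ) :
    0 ≤ condVar w P f :=
  sum_nonneg fun γ _ => mass_mul_cov_self_nonneg (cell_nonneg hw P γ)

theorem condVar_comp_equiv [Fintype Γ] {Γ' : Type*} [Fintype Γ'] (P : Ω → Γ) (e : Γ ≃ Γ')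
    (f : Ω → ℝ) : condVar w (e ∘ P) f = condVar w P f := by
  have hcell : ∀ γ, cell w (e ∘ P) (e γ) = cell w P γ := fun γ => by
    ext x; simp [cell, e.apply_eq_iff_eq]
  exact (Fintype.sum_equiv e _ _ fun γ => by rw [hcell]).symm

theorem condVar_of_subsingleton [Fintype Γ] [Subsingleton Γ] (P : Ω → Γ) (f : Ω → ℝ) (γ : Γ) :
    condVar w P f = mass w * cov w f f := by
  have : cell w P γ = w := by ext x; simp [cell, Subsingleton.elim (P x) γ]
  rw [condVar, Fintype.sum_subsingleton _ γ, this]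

theorem condVar_prod [Fintype Γ] (b : Ω → Bool) (P : Ω → Γ) (f : Ω → ℝ) :
    condVar w (fun x => (b x, P x)) f = ∑ γ, condVar (cell w P γ) b f := by
  have hcell : ∀ β γ, cell w (fun x => (b x, P x)) (β, γ) = cell (cell w P γ) b β :=
    fun β γ => by ext x; by_cases h : P x = γ <;> simp [cell, h]
  simp only [condVar, Fintype.sum_prod_type_right, hcell]

/-- For a cell split into parts of masses `m₁, m₂` and means `μ₁, μ₂`: the mass times the squared
covariance with the `±1` indicator of the split is at most the between-parts variance
`m₁ m₂ (μ₁ - μ₂)² / (m₁ + m₂)`, the ratio being `4 m₁ m₂ / (m₁ + m₂)² ≤ 1`. -/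
theorem sq_cov_two_cells_le {m₁ m₂ μ₁ μ₂ : ℝ} (h₁ : 0 ≤ m₁) (h₂ : 0 ≤ m₂) (h : 0 < m₁ + m₂) :
    (m₁ + m₂) * ((m₁ * μ₁ - m₂ * μ₂) / (m₁ + m₂)
      - (m₁ * μ₁ + m₂ * μ₂) / (m₁ + m₂) * ((m₁ - m₂) / (m₁ + m₂))) ^ 2
    ≤ m₁ * μ₁ ^ 2 + m₂ * μ₂ ^ 2 - (m₁ + m₂) * ((m₁ * μ₁ + m₂ * μ₂) / (m₁ + m₂)) ^ 2 := by
  have hdiff : m₁ * μ₁ ^ 2 + m₂ * μ₂ ^ 2 - (m₁ + m₂) * ((m₁ * μ₁ + m₂ * μ₂) / (m₁ + m₂)) ^ 2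
      - (m₁ + m₂) * ((m₁ * μ₁ - m₂ * μ₂) / (m₁ + m₂)
        - (m₁ * μ₁ + m₂ * μ₂) / (m₁ + m₂) * ((m₁ - m₂) / (m₁ + m₂))) ^ 2
      = m₁ * m₂ * (μ₁ - μ₂) ^ 2 * (m₁ - m₂) ^ 2 / (m₁ + m₂) ^ 3 := by
    field_simp
    ring
  have : 0 ≤ m₁ * m₂ * (μ₁ - μ₂) ^ 2 * (m₁ - m₂) ^ 2 / (m₁ + m₂) ^ 3 := by positivity
  linarith

theorem mass_mul_sq_cov_add_condVar_le (hw : ∀ x, 0 ≤ w x) (b : Ω → Bool) (f : Ω → ℝ) :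
    mass w * cov w f (fun x => spin (b x)) ^ 2 + condVar w b f ≤ mass w * cov w f f := by
  rcases (mass_nonneg hw).eq_or_lt with h | h
  · obtain rfl : w = 0 := funext (eq_zero_of_mass_eq_zero hw h.symm)
    simp [condVar, cell, mass]
  set w₁ := cell w b true
  set w₂ := cell w b false
  have hw₁ : ∀ x, 0 ≤ w₁ x := cell_nonneg hw b true
  have hw₂ : ∀ x, 0 ≤ w₂ x := cell_nonneg hw b false
  have hsplit : ∀ g : Ω → ℝ, ∑ x, w x * g x = ∑ x, w₁ x * g x + ∑ x, w₂ x * g x := fun g => by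
    rw [← sum_add_distrib]
    exact sum_congr rfl fun x _ => by cases hb : b x <;> simp [w₁, w₂, cell, hb]
  have hsign : ∀ g : Ω → ℝ, ∑ x, w x * (g x * spin (b x)) = ∑ x, w₁ x * g x - ∑ x, w₂ x * g x :=
    fun g => by
      rw [← sum_sub_distrib]
      exact sum_congr rfl fun x _ => by cases hb : b x <;> simp [w₁, w₂, cell, spin, hb]
  have hm : mass w = mass w₁ + mass w₂ := by simpa [mass] using hsplit 1
  have hmean : mean w f = (mass w₁ * mean w₁ f + mass w₂ * mean w₂ f) / mass w := by
    rw [mean, hsplit, mass_mul_mean hw₁, mass_mul_mean hw₂]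
  have hmean_mul : mean w (fun x => f x * spin (b x))
      = (mass w₁ * mean w₁ f - mass w₂ * mean w₂ f) / mass w := by
    rw [mean, hsign, mass_mul_mean hw₁, mass_mul_mean hw₂]
  have hmean_sign : mean w (fun x => spin (b x)) = (mass w₁ - mass w₂) / mass w := by
    simpa [mean, mass] using congrArg (· / mass w) (hsign 1)
  have hcond : condVar w b f = mass w₁ * cov w₁ f f + mass w₂ * cov w₂ f f :=
    Fintype.sum_bool _
  rw [hcond, cov, hmean_mul, hmean_sign, mass_mul_cov_self hw₁, mass_mul_cov_self hw₂,
    mass_mul_cov_self hw, hsplit, hmean, hm]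
  rw [hm] at h
  linarith [sq_cov_two_cells_le (μ₁ := mean w₁ f) (μ₂ := mean w₂ f) (mass_nonneg hw₁)
    (mass_nonneg hw₂) h]

theorem condVar_prod_add_le [Fintype Γ] (hw : ∀ x, 0 ≤ w x) (b : Ω → Bool) (P : Ω → Γ)
    (f : Ω → ℝ) :
    condVar w (fun x => (b x, P x)) f
      + ∑ γ, mass (cell w P γ) * cov (cell w P γ) f (fun x => spin (b x)) ^ 2
      ≤ condVar w P f := by
  rw [condVar_prod, ← sum_add_distrib]
  exact sum_le_sum fun γ _ => by
    linarith [mass_mul_sq_cov_add_condVar_le (cell_nonneg hw P γ) b f]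

section Pinning

variable [Fintype ι] (b : ι → Ω → Bool)

def totalCondVar [Fintype Γ] (w : Ω → ℝ) (P : Ω → Γ) : ℝ :=
  ∑ i, condVar w P fun x => spin (b i x)

def covSq [Fintype Γ] (w : Ω → ℝ) (P : Ω → Γ) : ℝ :=
  ∑ γ, mass (cell w P γ) *
    ∑ i, ∑ j, cov (cell w P γ) (fun x => spin (b i x)) (fun x => spin (b j x)) ^ 2

theorem totalCondVar_nonneg [Fintype Γ] (hw : ∀ x, 0 ≤ w x) (P : Ω → Γ) :
    0 ≤ totalCondVar b w P :=
  sum_nonneg fun _ _ => condVar_nonneg hw P _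

theorem exists_totalCondVar_prod_le [Fintype Γ] [Nonempty ι] (hw : ∀ x, 0 ≤ w x) (P : Ω → Γ) :
    ∃ j, Fintype.card ι * totalCondVar b w (fun x => (b j x, P x)) + covSq b w P
      ≤ Fintype.card ι * totalCondVar b w P := by
  have hcovSq : covSq b w P = ∑ i, ∑ j, ∑ γ, mass (cell w P γ) *
      cov (cell w P γ) (fun x => spin (b i x)) (fun x => spin (b j x)) ^ 2 := by
    simp only [covSq, mul_sum]
    rw [sum_comm]
    exact sum_congr rfl fun i _ => sum_comm
  have hsum : ∑ j, totalCondVar b w (fun x => (b j x, P x)) + covSq b w P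
      ≤ Fintype.card ι * totalCondVar b w P := by
    calc ∑ j, totalCondVar b w (fun x => (b j x, P x)) + covSq b w P
        = ∑ i, ∑ j, (condVar w (fun x => (b j x, P x)) (fun x => spin (b i x))
          + ∑ γ, mass (cell w P γ) *
            cov (cell w P γ) (fun x => spin (b i x)) (fun x => spin (b j x)) ^ 2) := by
          simp only [totalCondVar, hcovSq, sum_add_distrib]
          rw [sum_comm]
      _ ≤ ∑ i, ∑ _j : ι, condVar w P (fun x => spin (b i x)) :=
          sum_le_sum fun i _ => sum_le_sum fun j _ => condVar_prod_add_le hw (b j) P _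
      _ = Fintype.card ι * totalCondVar b w P := by simp [totalCondVar, mul_sum]
  obtain ⟨j, -, hj⟩ := exists_le_of_sum_le (s := univ) univ_nonempty
    (f := fun j => Fintype.card ι * totalCondVar b w (fun x => (b j x, P x)) + covSq b w P)
    (g := fun _ => Fintype.card ι * totalCondVar b w P) (by
      simp only [sum_add_distrib, ← mul_sum, sum_const, card_univ, nsmul_eq_mul]
      nlinarith [(Nat.cast_nonneg (Fintype.card ι) : (0 : ℝ) ≤ _)])
  exact ⟨j, hj⟩

theorem exists_pin_totalCondVar_add_le [Nonempty ι] (hw : ∀ x, 0 ≤ w x) {c : ℝ} :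
    ∀ k : ℕ, (∀ t < k, ∀ s : Fin t → ι, c ≤ covSq b w (pin b s)) →
      ∃ s : Fin k → ι, Fintype.card ι * totalCondVar b w (pin b s) + k * c
        ≤ Fintype.card ι ^ 2 * mass w
  | 0, _ => by
    refine ⟨finZeroElim, ?_⟩
    have hle : totalCondVar b w (pin b (finZeroElim : Fin 0 → ι)) ≤ Fintype.card ι * mass w := by
      simpa [totalCondVar, condVar_of_subsingleton _ _ (finZeroElim : Fin 0 → Bool)] using
        sum_le_sum fun i (_ : i ∈ univ) => mass_mul_cov_self_le hw (f := fun x => spin (b i x))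
          fun x => spin_mul_self _
    simp only [CharP.cast_eq_zero, zero_mul, add_zero]
    nlinarith [(Nat.cast_nonneg (Fintype.card ι) : (0 : ℝ) ≤ _)]
  | k + 1, hc => by
    obtain ⟨s, hs⟩ := exists_pin_totalCondVar_add_le hw k fun t ht => hc t (by omega)
    obtain ⟨j, hj⟩ := exists_totalCondVar_prod_le b hw (pin b s)
    refine ⟨Fin.cons j s, ?_⟩
    have hΦ : totalCondVar b w (pin b (Fin.cons j s))
        = totalCondVar b w (fun x => (b j x, pin b s x)) := by
      rw [pin_cons]
      exact sum_congr rfl fun i _ => condVar_comp_equiv _ _ _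
    have hck := hc k (lt_add_one k) s
    rw [hΦ]
    push_cast
    linarith

theorem exists_pin_covSq_le (hw : ∀ x, 0 ≤ w x) {k : ℕ} (hk : 0 < k) :
    ∃ t < k, ∃ s : Fin t → ι, covSq b w (pin b s) ≤ Fintype.card ι ^ 2 * mass w / k := by
  cases isEmpty_or_nonempty ι
  · exact ⟨0, hk, finZeroElim, by simp [covSq]⟩
  have : Nonempty (Σ t : Fin k, Fin t → ι) := ⟨⟨⟨0, hk⟩, finZeroElim⟩⟩
  -- `c` := the least `covSq` over all pinnings of fewer than `k` observables
  obtain ⟨⟨t, s⟩, hmin⟩ := Finite.exists_min fun p : Σ t : Fin k, Fin t → ι => covSq b w (pin b p.2)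
  obtain ⟨s', hs'⟩ := exists_pin_totalCondVar_add_le b hw k fun t' ht' s'' => hmin ⟨⟨t', ht'⟩, s''⟩
  refine ⟨t, t.2, s, ?_⟩
  rw [le_div_iff₀ (by exact_mod_cast hk)]
  nlinarith [totalCondVar_nonneg b hw (pin b s'), (Nat.cast_nonneg (Fintype.card ι) : (0 : ℝ) ≤ _)]

end Pinning

end Weighted

section Ising

open Weighted

theorem binEnt_eq_binEntropy (p : ℝ) : binEnt p = binEntropy p := by
  rw [binEnt, binEntropy_eq_negMulLog_add_negMulLog_one_sub, negMulLog, negMulLog]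
  ring

theorem sum_negMulLog_le_sum_binEnt {ι : Type*} [Fintype ι] [DecidableEq ι] {p : (ι → Bool) → ℝ}
    (hp : ∀ x, 0 ≤ p x) (hp1 : ∑ x, p x = 1) :
    ∑ x, negMulLog (p x) ≤ ∑ i, binEnt ((∑ x, p x * spin (x i) + 1) / 2) := by
  refine (sum_negMulLog_le_sum_negMulLog_marginal hp hp1).trans_eq (sum_congr rfl fun i _ => ?_)
  set r := fun a => ∑ x, if x i = a then p x else 0
  have hadd : r true + r false = 1 := by
    rw [← hp1, ← sum_add_distrib]
    exact sum_congr rfl fun x _ => by cases x i <;> simp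
  have hsub : r true - r false = ∑ x, p x * spin (x i) := by
    rw [← sum_sub_distrib]
    exact sum_congr rfl fun x _ => by cases x i <;> simp [spin]
  have htrue : r true = (∑ x, p x * spin (x i) + 1) / 2 := by linarith
  rw [Fintype.sum_bool, binEnt_eq_binEntropy, binEntropy_eq_negMulLog_add_negMulLog_one_sub,
    ← htrue, show 1 - r true = r false by linarith]

variable {n : ℕ} (J : Matrix (Fin n) (Fin n) ℝ)

def gibbsWeight (x : Fin n → Bool) : ℝ := exp (ham J x)

theorem gibbsWeight_nonneg (x : Fin n → Bool) : 0 ≤ gibbsWeight J x := (exp_pos _).le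

theorem mass_gibbsWeight : mass (gibbsWeight J) = partZ J := rfl

theorem frob_nonneg : 0 ≤ frob J := sqrt_nonneg _

theorem partZ_pos : 0 < partZ J := sum_pos (fun _ _ => exp_pos _) univ_nonempty

theorem bddAbove_mfObj :
    BddAbove {v | ∃ x : Fin n → ℝ, (∀ i, -1 ≤ x i ∧ x i ≤ 1) ∧ v = mfObj J x} := by
  refine ⟨∑ i, ∑ j, |J i j| + n * log 2, ?_⟩
  rintro v ⟨x, hx, rfl⟩
  have hx' : ∀ i, |x i| ≤ 1 := fun i => abs_le.mpr (hx i)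
  have hquad : ∀ i j, (if i < j then J i j * x i * x j else 0) ≤ |J i j| := fun i j => by
    split_ifs
    · calc J i j * x i * x j ≤ |J i j * x i * x j| := le_abs_self _
        _ = |J i j| * (|x i| * |x j|) := by rw [abs_mul, abs_mul, mul_assoc]
        _ ≤ |J i j| * 1 := by gcongr; exact mul_le_one₀ (hx' i) (abs_nonneg _) (hx' j)
        _ = |J i j| := mul_one _
    · exact abs_nonneg _
  have hent : ∑ i, binEnt ((x i + 1) / 2) ≤ n * log 2 := by
    simpa [binEnt_eq_binEntropy] using sum_le_sum fun i (_ : i ∈ univ) =>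
      binEntropy_le_log_two (p := (x i + 1) / 2)
  exact add_le_add (sum_le_sum fun i _ => sum_le_sum fun j _ => hquad i j) hent

theorem mfObj_le_mfFreeEnergy {x : Fin n → ℝ} (hx : ∀ i, -1 ≤ x i ∧ x i ≤ 1) :
    mfObj J x ≤ mfFreeEnergy J :=
  le_csSup (bddAbove_mfObj J) ⟨x, hx, rfl⟩

theorem sum_ite_lt_mul_le_frob_mul_sqrt (c : Fin n → Fin n → ℝ) :
    ∑ i, ∑ j, (if i < j then J i j * c i j else 0) ≤ frob J * √(∑ i, ∑ j, c i j ^ 2) := by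
  calc ∑ i, ∑ j, (if i < j then J i j * c i j else 0)
      ≤ ∑ p : Fin n × Fin n, |J p.1 p.2| * |c p.1 p.2| := by
        rw [Fintype.sum_prod_type' (f := fun i j => |J i j| * |c i j|)]
        refine sum_le_sum fun i _ => sum_le_sum fun j _ => ?_
        split_ifs
        · exact (le_abs_self _).trans (abs_mul _ _).le
        · positivity
    _ ≤ √(∑ p : Fin n × Fin n, |J p.1 p.2| ^ 2) * √(∑ p : Fin n × Fin n, |c p.1 p.2| ^ 2) :=
        Real.sum_mul_le_sqrt_mul_sqrt _ _ _
    _ = frob J * √(∑ i, ∑ j, c i j ^ 2) := by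
        simp only [sq_abs, frob]
        rw [Fintype.sum_prod_type' (f := fun i j => J i j ^ 2),
          Fintype.sum_prod_type' (f := fun i j => c i j ^ 2)]

theorem mean_ham (W : (Fin n → Bool) → ℝ) :
    mean W (ham J) = ∑ i, ∑ j,
      if i < j then J i j * mean W (fun x => spin (x i) * spin (x j)) else 0 := by
  simp only [mean_eq_sum, ham, mul_sum]
  rw [sum_comm]
  refine sum_congr rfl fun i _ => ?_
  rw [sum_comm]
  refine sum_congr rfl fun j _ => ?_
  split_ifs
  · exact sum_congr rfl fun x _ => by ring
  · simp

theorem log_mass_cell_le {Γ : Type*} (P : (Fin n → Bool) → Γ) (γ : Γ)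
    (hm : 0 < mass (cell (gibbsWeight J) P γ)) :
    log (mass (cell (gibbsWeight J) P γ)) ≤
      mfObj J (fun i => mean (cell (gibbsWeight J) P γ) fun x => spin (x i))
      + ∑ i, ∑ j, if i < j then J i j * cov (cell (gibbsWeight J) P γ)
          (fun x => spin (x i)) (fun x => spin (x j)) else 0 := by
  set W := cell (gibbsWeight J) P γ
  have hW : ∀ x, 0 ≤ W x := cell_nonneg (gibbsWeight_nonneg J) P γ
  have hgibbs : log (mass W) = mean W (ham J) + ∑ x, negMulLog (W x / mass W) := by
    have h := log_sum_eq_sum_mul_log_add_sum_negMulLog hW hm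
    change log (mass W) = ∑ x, W x / mass W * log (W x) + ∑ x, negMulLog (W x / mass W) at h
    rw [h, mean_eq_sum]
    congr 1
    refine sum_congr rfl fun x _ => ?_
    by_cases hx : P x = γ
    · rw [show W x = exp (ham J x) from if_pos hx, log_exp]
    · simp [show W x = 0 from if_neg hx]
  have hent : ∑ x, negMulLog (W x / mass W)
      ≤ ∑ i, binEnt ((mean W (fun x => spin (x i)) + 1) / 2) := by
    simpa only [mean_eq_sum] using sum_negMulLog_le_sum_binEnt (p := fun x => W x / mass W)
      (fun x => div_nonneg (hW x) hm.le) (by rw [← sum_div]; exact div_self hm.ne')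
  rw [hgibbs, mean_ham, mfObj]
  have hsplit : ∀ i j, (if i < j then J i j * mean W (fun x => spin (x i) * spin (x j)) else 0)
      = (if i < j then J i j * mean W (fun x => spin (x i)) * mean W (fun x => spin (x j)) else 0)
        + if i < j then J i j * cov W (fun x => spin (x i)) (fun x => spin (x j)) else 0 :=
    fun i j => by split_ifs <;> simp [cov]; ring
  simp only [hsplit, sum_add_distrib]
  linarith

theorem log_mass_cell_le_mfFreeEnergy_add {Γ : Type*} (P : (Fin n → Bool) → Γ) (γ : Γ)
    (hm : 0 < mass (cell (gibbsWeight J) P γ)) :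
    log (mass (cell (gibbsWeight J) P γ)) ≤ mfFreeEnergy J + frob J * √(∑ i, ∑ j,
      cov (cell (gibbsWeight J) P γ) (fun x => spin (x i)) (fun x => spin (x j)) ^ 2) := by
  have hbox : ∀ i, -1 ≤ mean (cell (gibbsWeight J) P γ) (fun x => spin (x i)) ∧
      mean (cell (gibbsWeight J) P γ) (fun x => spin (x i)) ≤ 1 := fun i =>
    abs_le.mp <| abs_mean_le_one (cell_nonneg (gibbsWeight_nonneg J) P γ) fun x =>
      abs_spin_le_one _
  linarith [log_mass_cell_le J P γ hm, mfObj_le_mfFreeEnergy J hbox,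
    sum_ite_lt_mul_le_frob_mul_sqrt J fun i j =>
      cov (cell (gibbsWeight J) P γ) (fun x => spin (x i)) (fun x => spin (x j))]

theorem freeEnergy_le_log_card_add_mfFreeEnergy {Γ : Type*} [Fintype Γ] (P : (Fin n → Bool) → Γ) :
    freeEnergy J ≤ log (Fintype.card Γ) + mfFreeEnergy J
      + frob J * √(covSq (fun i x => x i) (gibbsWeight J) P / partZ J) := by
  set Z : Γ → ℝ := fun γ => mass (cell (gibbsWeight J) P γ)
  set C : Γ → ℝ := fun γ => ∑ i, ∑ j,
    cov (cell (gibbsWeight J) P γ) (fun x => spin (x i)) (fun x => spin (x j)) ^ 2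
  have hZ : ∀ γ, 0 ≤ Z γ := fun γ => mass_nonneg (cell_nonneg (gibbsWeight_nonneg J) P γ)
  have hZsum : ∑ γ, Z γ = partZ J := sum_mass_cell P
  have hp1 : ∑ γ, Z γ / partZ J = 1 := by rw [← sum_div, hZsum, div_self (partZ_pos J).ne']
  have hcell : ∀ γ, Z γ / partZ J * log (Z γ)
      ≤ Z γ / partZ J * (mfFreeEnergy J + frob J * √(C γ)) := fun γ => by
    rcases (hZ γ).eq_or_lt with h | h
    · simp [← h]
    · exact mul_le_mul_of_nonneg_left (log_mass_cell_le_mfFreeEnergy_add J P γ h)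
        (div_nonneg h.le (partZ_pos J).le)
  have hjensen := sum_mul_sqrt_le_sqrt_sum_mul (p := fun γ => Z γ / partZ J) (q := C)
    (fun γ => div_nonneg (hZ γ) (partZ_pos J).le) hp1
    fun γ => sum_nonneg fun i _ => sum_nonneg fun j _ => sq_nonneg _
  have hcovSq : ∑ γ, Z γ / partZ J * C γ = covSq (fun i x => x i) (gibbsWeight J) P / partZ J := by
    rw [covSq, sum_div]
    exact sum_congr rfl fun γ _ => div_mul_eq_mul_div _ _ _
  have hfrob := frob_nonneg J
  calc freeEnergy J = log (partZ J) := rfl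
    _ ≤ log (Fintype.card Γ) + ∑ γ, Z γ / partZ J * log (Z γ) := by
        simpa only [hZsum] using log_sum_le_log_card_add_sum_mul_log hZ (hZsum ▸ partZ_pos J)
    _ ≤ log (Fintype.card Γ) + ∑ γ, Z γ / partZ J * (mfFreeEnergy J + frob J * √(C γ)) :=
        add_le_add_right (sum_le_sum fun γ _ => hcell γ) _
    _ = log (Fintype.card Γ) + mfFreeEnergy J + frob J * ∑ γ, Z γ / partZ J * √(C γ) := by
        simp only [mul_add, sum_add_distrib, ← sum_mul, hp1, one_mul, mul_sum,
          mul_left_comm (frob J)]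
        ring
    _ ≤ _ := by
        rw [← hcovSq]
        gcongr

end Ising

theorem floor_mul_log_two_add_div_sqrt_le {a : ℝ} (ha : 0 ≤ a) :
    ⌊a ^ ((2 : ℝ) / 3)⌋₊ * log 2 + a / √(⌊a ^ ((2 : ℝ) / 3)⌋₊ + 1) ≤ 3 * a ^ ((2 : ℝ) / 3) := by
  set u := a ^ ((2 : ℝ) / 3)
  have hu : 0 ≤ u := by positivity
  have hfloor : (⌊u⌋₊ : ℝ) ≤ u := Nat.floor_le hu
  have hk : u ≤ ⌊u⌋₊ + 1 := (Nat.lt_floor_add_one u).le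
  have ha_eq : a = u * √u := by
    rw [sqrt_eq_rpow, ← rpow_mul ha, ← rpow_add' ha (by norm_num)]
    norm_num
  have hdiv : a / √(⌊u⌋₊ + 1) ≤ u := by
    rw [div_le_iff₀ (by positivity), ha_eq]
    exact mul_le_mul_of_nonneg_left (sqrt_le_sqrt hk) hu
  have hlog : log 2 ≤ 1 := by linarith [log_two_lt_d9]
  nlinarith [log_nonneg one_le_two]

theorem mean_field_approximation_bound_general {n : ℕ} (J : Matrix (Fin n) (Fin n) ℝ) :
    freeEnergy J - mfFreeEnergy J ≤ 3 * (n : ℝ) ^ ((2 : ℝ) / 3) * frob J ^ ((2 : ℝ) / 3) := by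
  set a := n * frob J
  have ha : 0 ≤ a := mul_nonneg n.cast_nonneg (frob_nonneg J)
  set m := ⌊a ^ ((2 : ℝ) / 3)⌋₊
  obtain ⟨t, ht, s, hs⟩ := Weighted.exists_pin_covSq_le (fun i (x : Fin n → Bool) => x i)
    (gibbsWeight_nonneg J) m.succ_pos
  have hF := freeEnergy_le_log_card_add_mfFreeEnergy J (Weighted.pin (fun i x => x i) s)
  rw [Fintype.card_fun, Fintype.card_bool, Fintype.card_fin, Nat.cast_pow, log_pow,
    Nat.cast_ofNat] at hF
  have hcov : frob J * √(Weighted.covSq (fun i x => x i) (gibbsWeight J)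
      (Weighted.pin (fun i x => x i) s) / partZ J) ≤ a / √(m + 1) := by
    calc _ ≤ frob J * √(n ^ 2 / (m + 1)) := by
          refine mul_le_mul_of_nonneg_left (sqrt_le_sqrt ?_) (frob_nonneg J)
          rw [div_le_iff₀ (partZ_pos J), div_mul_eq_mul_div]
          simpa [mass_gibbsWeight] using hs
      _ = a / √(m + 1) := by
          rw [sqrt_div (sq_nonneg _), sqrt_sq n.cast_nonneg]
          ring
  have ht' : (t : ℝ) ≤ m := by exact_mod_cast Nat.lt_succ_iff.mp ht
  rw [mul_assoc, ← mul_rpow n.cast_nonneg (frob_nonneg J)]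
  nlinarith [floor_mul_log_two_add_div_sqrt_le ha, log_nonneg one_le_two]

/-- Theorem 1.1: `F − F* ≤ 3 n^{2/3} ‖J‖_F^{2/3}`. -/
theorem mean_field_approximation_bound {n : ℕ} (J : Matrix (Fin n) (Fin n) ℝ)
    (hsym : J.IsSymm) (hdiag : ∀ i, J i i = 0) :
    freeEnergy J - mfFreeEnergy J ≤ 3 * (n : ℝ) ^ ((2 : ℝ) / 3) * frob J ^ ((2 : ℝ) / 3) :=
  mean_field_approximation_bound_general J

end
end

section
/- Let X_1,…,X_n be jointly distributed {±1}-valued random variables and let V = [n]. Then for any k, ℓ ∈ [n], there exists an integer t with 0 ≤ t ≤ ℓ such that E_{S ∼ Unif(V choose t)} E_{F ∼ Unif((V∖S) choose k)} [C(X_F | X_S)] ≤ k² log(2) / ℓ, where S is a uniformly random subset of V of size t and, given S, F is a uniformly random subset of V∖S of size k. -/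
open Finset

noncomputable section
open scoped Classical

/-- A probability mass function on a finite type. -/
def IsDist {Ω : Type*} [Fintype Ω] (μ : Ω → ℝ) : Prop :=
  (∀ x, 0 ≤ μ x) ∧ ∑ x, μ x = 1

/-- Marginal probability that the coordinates in `A` agree with `y`. -/
def marg {n : ℕ} (μ : (Fin n → Bool) → ℝ) (A : Finset (Fin n)) (y : Fin n → Bool) : ℝ :=
  ∑ x : Fin n → Bool, if ∀ i ∈ A, x i = y i then μ x else 0

/-- Canonical representatives of assignments to the coordinates in `A`. -/
def reps {n : ℕ} (A : Finset (Fin n)) : Finset (Fin n → Bool) :=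
  Finset.univ.filter fun y => ∀ i ∉ A, y i = false

/-- Shannon entropy (natural log) of the marginal of `μ` on the coordinates in `A`,
i.e. `H(X_A)`. -/
def margEnt {n : ℕ} (μ : (Fin n → Bool) → ℝ) (A : Finset (Fin n)) : ℝ :=
  -∑ y ∈ reps A, marg μ A y * Real.log (marg μ A y)

/-- Conditional entropy `H(X_F | X_S) = H(X_{F∪S}) − H(X_S)`. -/
def condEnt {n : ℕ} (μ : (Fin n → Bool) → ℝ) (F S : Finset (Fin n)) : ℝ :=
  margEnt μ (F ∪ S) - margEnt μ S

/-- Conditional multivariate total correlation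
`C(X_F | X_S) = ∑_{i∈F} H(X_i | X_S) − H(X_F | X_S)`. -/
def condTC {n : ℕ} (μ : (Fin n → Bool) → ℝ) (F S : Finset (Fin n)) : ℝ :=
  (∑ i ∈ F, condEnt μ {i} S) - condEnt μ F S

/-!
Let `φ(t)` be the average of `H(X_i | X_S)` over `i` and `t`-sets `S ∌ i`. Entropy is monotone and
submodular, so `φ` is nonnegative and nonincreasing, with `φ(0) ≤ log 2`. Han's inequality bounds
`C(X_F | X_S)` by `∑_{i ∈ F} (H(X_i | X_S) - H(X_i | X_{S ∪ F∖i}))`, whose average over `(S, F)` is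
exactly `k (φ(t) - φ(t + k - 1))`. Summed over `t < ℓ` these gaps telescope to at most
`(k - 1) log 2`, so one of them is at most `(k - 1) log 2 / ℓ`. If `ℓ + k > n`, then for
`t = n - k + 1` no `F` fits beside `S` and the average is `0`.

Only the monotonicity and submodularity of `A ↦ H(X_A)` and the bound `H(X_i) ≤ log 2` enter, so
the argument applies verbatim to any monotone submodular set function `f`.
-/

namespace CorrelationRounding

section SetFunction

variable {α : Type*} [DecidableEq α]

def IsSubmodular (f : Finset α → ℝ) : Prop :=
  ∀ A B, f (A ∪ B) + f (A ∩ B) ≤ f A + f B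

def gain (f : Finset α → ℝ) (i : α) (S : Finset α) : ℝ :=
  f (insert i S) - f S

/-- `condTC μ` is `condTotalCorr (margEnt μ)` by definition. -/
def condTotalCorr (f : Finset α → ℝ) (F S : Finset α) : ℝ :=
  ∑ i ∈ F, (f ({i} ∪ S) - f S) - (f (F ∪ S) - f S)

variable {f : Finset α → ℝ}

lemma gain_nonneg (hf : Monotone f) (i : α) (S : Finset α) : 0 ≤ gain f i S :=
  sub_nonneg.2 (hf (subset_insert i S))

namespace IsSubmodular

lemma gain_anti_of_notMem (hf : IsSubmodular f) {A B : Finset α} (hAB : A ⊆ B) {i : α}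
    (hi : i ∉ B) : gain f i B ≤ gain f i A := by
  have h := hf (insert i A) B
  rw [insert_union, union_eq_right.2 hAB, insert_inter_of_notMem hi, inter_eq_left.2 hAB] at h
  unfold gain
  linarith

lemma gain_anti (hf : IsSubmodular f) (hmono : Monotone f) {A B : Finset α} (hAB : A ⊆ B)
    (i : α) : gain f i B ≤ gain f i A := by
  by_cases hi : i ∈ B
  · rw [gain, insert_eq_of_mem hi, sub_self]
    exact gain_nonneg hmono i A
  · exact hf.gain_anti_of_notMem hAB hi

lemma union_right (hf : IsSubmodular f) (S : Finset α) : IsSubmodular fun T ↦ f (T ∪ S) := by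
  intro A B
  have h := hf (A ∪ S) (B ∪ S)
  rwa [← union_union_distrib_right, ← inter_union_distrib_right] at h

/-- Han's inequality for submodular functions. -/
lemma sum_sub_erase_le (hf : IsSubmodular f) (F : Finset α) :
    ∑ i ∈ F, (f F - f (F.erase i)) ≤ f F - f ∅ := by
  induction F using Finset.induction_on with
  | empty => simp
  | insert a F ha ih =>
    have step : ∀ i ∈ F, f (insert a F) - f ((insert a F).erase i) ≤ f F - f (F.erase i) := by
      intro i hi
      have h := hf.gain_anti_of_notMem (erase_subset i F) ha
      rw [erase_insert_of_ne (ne_of_mem_of_not_mem hi ha).symm]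
      unfold gain at h
      linarith
    rw [sum_insert ha, erase_insert ha]
    linarith [sum_le_sum step]

lemma condTotalCorr_le (hf : IsSubmodular f) (F S : Finset α) :
    condTotalCorr f F S ≤ ∑ i ∈ F, (gain f i S - gain f i (F.erase i ∪ S)) := by
  have han := (hf.union_right S).sum_sub_erase_le F
  have hgain : ∀ i ∈ F, gain f i (F.erase i ∪ S) = f (F ∪ S) - f (F.erase i ∪ S) := by
    intro i hi
    rw [gain, ← insert_union, insert_erase hi]
  rw [empty_union] at han
  rw [sum_sub_distrib, sum_congr rfl hgain, condTotalCorr]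
  simp only [gain, ← insert_eq]
  linarith

end IsSubmodular

end SetFunction

section Reindexing

variable {α : Type*} [DecidableEq α]

lemma sum_powersetCard_succ_sum_mem (W : Finset α) (k : ℕ) (v : α → Finset α → ℝ) :
    ∑ F ∈ powersetCard (k + 1) W, ∑ i ∈ F, v i (F.erase i) =
      ∑ i ∈ W, ∑ F ∈ powersetCard k (W.erase i), v i F := by
  rw [sum_sigma', sum_sigma']
  refine sum_nbij' (fun p ↦ ⟨p.2, p.1.erase p.2⟩) (fun q ↦ ⟨insert q.1 q.2, q.1⟩) ?_ ?_ ?_ ?_ ?_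
  · rintro ⟨F, i⟩ h
    simp only [mem_sigma, mem_powersetCard] at h ⊢
    exact ⟨h.1.1 h.2, erase_subset_erase i h.1.1, by rw [card_erase_of_mem h.2, h.1.2]; rfl⟩
  · rintro ⟨i, F⟩ h
    simp only [mem_sigma, mem_powersetCard, subset_erase] at h ⊢
    refine ⟨⟨insert_subset h.1 h.2.1.1, ?_⟩, mem_insert_self i F⟩
    rw [card_insert_of_notMem h.2.1.2, h.2.2]
  · rintro ⟨F, i⟩ h
    simp only [mem_sigma] at h
    simp [insert_erase h.2]
  · rintro ⟨i, F⟩ h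
    simp only [mem_sigma, mem_powersetCard, subset_erase] at h
    simp [erase_insert h.2.1.2]
  · intros
    rfl

lemma sum_powersetCard_sum_sdiff (U : Finset α) (t : ℕ) (w : α → Finset α → ℝ) :
    ∑ S ∈ powersetCard t U, ∑ i ∈ U \ S, w i S =
      ∑ i ∈ U, ∑ S ∈ powersetCard t (U.erase i), w i S :=
  sum_comm' fun S i ↦ by
    simp only [mem_powersetCard, mem_sdiff, subset_erase]
    tauto

lemma sum_powersetCard_sum_powersetCard_sdiff (U : Finset α) (a b : ℕ)
    (g : Finset α → ℝ) :
    ∑ S ∈ powersetCard a U, ∑ F ∈ powersetCard b (U \ S), g (F ∪ S) =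
      (a + b).choose a * ∑ T ∈ powersetCard (a + b) U, g T := by
  have hchoose : ∀ T ∈ powersetCard (a + b) U,
      ((a + b).choose a : ℝ) * g T = ∑ _S ∈ powersetCard a T, g T := by
    intro T hT
    rw [sum_const, card_powersetCard, (mem_powersetCard.1 hT).2, nsmul_eq_mul]
  rw [mul_sum, sum_congr rfl hchoose, sum_sigma', sum_sigma']
  refine sum_nbij' (fun p ↦ ⟨p.2 ∪ p.1, p.1⟩) (fun q ↦ ⟨q.2, q.1 \ q.2⟩) ?_ ?_ ?_ ?_ ?_
  · rintro ⟨S, F⟩ h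
    simp only [mem_sigma, mem_powersetCard, subset_sdiff] at h ⊢
    refine ⟨⟨union_subset h.2.1.1 h.1.1, ?_⟩, subset_union_right, h.1.2⟩
    rw [card_union_of_disjoint h.2.1.2, h.2.2, h.1.2, add_comm]
  · rintro ⟨T, S⟩ h
    simp only [mem_sigma, mem_powersetCard] at h ⊢
    refine ⟨⟨h.2.1.trans h.1.1, h.2.2⟩, sdiff_subset_sdiff h.1.1 le_rfl, ?_⟩
    rw [card_sdiff_of_subset h.2.1, h.1.2, h.2.2, Nat.add_sub_cancel_left]
  · rintro ⟨S, F⟩ h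
    simp only [mem_sigma, mem_powersetCard, subset_sdiff] at h
    simp [union_sdiff_cancel_right h.2.1.2]
  · rintro ⟨T, S⟩ h
    simp only [mem_sigma, mem_powersetCard] at h
    simp [sdiff_union_of_subset h.2.1]
  · intros
    rfl

end Reindexing

lemma exists_lt_sub_add_le {φ : ℕ → ℝ} {ℓ d : ℕ} {M : ℝ} (hℓ : 0 < ℓ) (h₀ : ∀ t, 0 ≤ φ t)
    (hM : ∀ t < d, φ t ≤ M) : ∃ t < ℓ, φ t - φ (t + d) ≤ d * M / ℓ := by
  have htelescope : ∑ t ∈ range ℓ, (φ t - φ (t + d)) = ∑ t ∈ range d, (φ t - φ (ℓ + t)) := by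
    have h₁ := sum_range_add φ ℓ d
    have h₂ := sum_range_add φ d ℓ
    rw [add_comm d ℓ] at h₂
    simp_rw [sum_sub_distrib, add_comm _ d]
    linarith
  have hsum : ∑ t ∈ range ℓ, (φ t - φ (t + d)) ≤ ∑ _t ∈ range ℓ, (d * M / ℓ) := by
    rw [htelescope, sum_const, card_range, nsmul_eq_mul, mul_div_cancel₀ _ (by positivity)]
    calc ∑ t ∈ range d, (φ t - φ (ℓ + t)) ≤ ∑ _t ∈ range d, M :=
          sum_le_sum fun t ht ↦ by linarith [hM t (mem_range.1 ht), h₀ (ℓ + t)]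
      _ = d * M := by simp
  obtain ⟨t, ht, hle⟩ := exists_le_of_sum_le (nonempty_range_iff.2 hℓ.ne') hsum
  exact ⟨t, mem_range.1 ht, hle⟩

section Averages

variable {α : Type*} [Fintype α] [DecidableEq α]

def doubleAvg (c : Finset α → Finset α → ℝ) (t k : ℕ) : ℝ :=
  (∑ S ∈ powersetCard t univ, (∑ F ∈ powersetCard k (univ \ S), c F S)
      / ((Fintype.card α - t).choose k : ℝ)) / ((Fintype.card α).choose t : ℝ)

def pairSum (h : α → Finset α → ℝ) (t : ℕ) : ℝ :=
  ∑ i, ∑ S ∈ powersetCard t (univ.erase i), h i S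

/-- `E_i E_{S ∼ ((α ∖ {i}) choose t)} [h i S]`. -/
def pairAvg (h : α → Finset α → ℝ) (t : ℕ) : ℝ :=
  pairSum h t / (Fintype.card α * (Fintype.card α - 1).choose t : ℝ)

lemma doubleAvg_eq (c : Finset α → Finset α → ℝ) (t k : ℕ) :
    doubleAvg c t k = (∑ S ∈ powersetCard t univ, ∑ F ∈ powersetCard k (univ \ S), c F S)
      / ((Fintype.card α - t).choose k * (Fintype.card α).choose t : ℝ) := by
  rw [doubleAvg, ← sum_div, div_div]

lemma doubleAvg_mono {c c' : Finset α → Finset α → ℝ} (h : ∀ F S, c F S ≤ c' F S) (t k : ℕ) :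
    doubleAvg c t k ≤ doubleAvg c' t k := by
  unfold doubleAvg
  gcongr with S _ F _
  exact h F S

lemma doubleAvg_nonneg {c : Finset α → Finset α → ℝ} (h : ∀ F S, 0 ≤ c F S) (t k : ℕ) :
    0 ≤ doubleAvg c t k := by
  simpa [doubleAvg] using doubleAvg_mono h t k

lemma doubleAvg_eq_zero_of_card_lt (c : Finset α → Finset α → ℝ) {t k : ℕ}
    (h : Fintype.card α < t + k) : doubleAvg c t k = 0 := by
  refine div_eq_zero_iff.2 (Or.inl (sum_eq_zero fun S hS ↦ ?_))
  have hSt := (mem_powersetCard.1 hS).2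
  have hSα := card_le_univ S
  rw [powersetCard_eq_empty.2 (by rw [card_sdiff_of_subset (subset_univ S), card_univ]; omega),
    sum_empty, zero_div]

lemma pairAvg_nonneg {h : α → Finset α → ℝ} (hh : ∀ i S, 0 ≤ h i S) (t : ℕ) :
    0 ≤ pairAvg h t :=
  div_nonneg (sum_nonneg fun i _ ↦ sum_nonneg fun S _ ↦ hh i S) (by positivity)

lemma pairAvg_zero_le [Nonempty α] {h : α → Finset α → ℝ} {M : ℝ} (hM : ∀ i, h i ∅ ≤ M) :
    pairAvg h 0 ≤ M := by
  rw [pairAvg, pairSum, Nat.choose_zero_right, Nat.cast_one, mul_one,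
    div_le_iff₀ (by exact_mod_cast Fintype.card_pos)]
  simpa [mul_comm] using sum_le_card_nsmul univ (fun i ↦ h i ∅) M fun i _ ↦ hM i

lemma sum_sum_sum_sub_erase_union_eq (h : α → Finset α → ℝ) (t d : ℕ) :
    ∑ S ∈ powersetCard t univ, ∑ F ∈ powersetCard (d + 1) (univ \ S),
        ∑ i ∈ F, (h i S - h i (F.erase i ∪ S)) =
      (Fintype.card α - 1 - t).choose d * pairSum h t
        - (t + d).choose t * pairSum h (t + d) := by
  have hcard : ∀ i : α, ∀ S ∈ powersetCard t (univ.erase i),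
      #(univ.erase i \ S) = Fintype.card α - 1 - t := by
    intro i S hS
    rw [card_sdiff_of_subset (mem_powersetCard.1 hS).1, card_erase_of_mem (mem_univ i),
      card_univ, (mem_powersetCard.1 hS).2]
  calc _ = ∑ i, ∑ S ∈ powersetCard t (univ.erase i), ∑ F ∈ powersetCard d (univ.erase i \ S),
        (h i S - h i (F ∪ S)) := by
        rw [← sum_powersetCard_sum_sdiff]
        refine sum_congr rfl fun S _ ↦ ?_
        simp_rw [erase_sdiff_comm]
        exact sum_powersetCard_succ_sum_mem _ d (fun i F ↦ h i S - h i (F ∪ S))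
    _ = _ := by
        simp_rw [sum_sub_distrib, sum_powersetCard_sum_powersetCard_sdiff, sum_const,
          card_powersetCard]
        rw [pairSum, pairSum, mul_sum, mul_sum]
        congr 1
        refine sum_congr rfl fun i _ ↦ ?_
        rw [mul_sum]
        exact sum_congr rfl fun S hS ↦ by rw [hcard i S hS, nsmul_eq_mul]

/- Both sides of the next two identities count the triples `(S, F, i)` with `#S = t`,
`#F = d + 1`, `i ∈ F` and `S ∩ F = ∅` in an `n`-element set. -/
lemma choose_sub_one_sub_mul_mul_choose {n t : ℕ} (ht : t < n) (d : ℕ) :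
    (n - 1 - t).choose d * (n * (n - 1).choose t) =
      (d + 1) * ((n - t).choose (d + 1) * n.choose t) := by
  obtain ⟨m, rfl⟩ : ∃ m, n = t + m + 1 := ⟨n - (t + 1), by omega⟩
  have h₁ := Nat.choose_mul_succ_eq (t + m) t
  have h₂ := Nat.add_one_mul_choose_eq m d
  rw [show t + m + 1 - t = m + 1 by omega] at h₁
  rw [show t + m + 1 - 1 - t = m by omega, show t + m + 1 - 1 = t + m by omega,
    show t + m + 1 - t = m + 1 by omega]
  linear_combination m.choose d * h₁ + (t + m + 1).choose t * h₂

lemma choose_add_mul_mul_choose {n t d : ℕ} (htd : t + d + 1 ≤ n) :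
    (t + d).choose t * (n * (n - 1).choose (t + d)) =
      (d + 1) * ((n - t).choose (d + 1) * n.choose t) := by
  obtain ⟨m, rfl⟩ : ∃ m, n = t + d + m + 1 := ⟨n - (t + d + 1), by omega⟩
  have h₁ := Nat.add_one_mul_choose_eq (t + d + m) (t + d)
  have h₂ := Nat.choose_mul_succ_eq (t + d) t
  have h₃ := Nat.choose_mul (n := t + d + m + 1) (k := t + d + 1) (s := t) (by omega)
  rw [show t + d + 1 - t = d + 1 by omega] at h₂ h₃
  rw [show t + d + m + 1 - t = d + m + 1 by omega] at h₃ ⊢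
  rw [show t + d + m + 1 - 1 = t + d + m by omega]
  linear_combination (t + d).choose t * h₁ + (t + d + m + 1).choose (t + d + 1) * h₂ + (d + 1) * h₃

lemma doubleAvg_sum_sub_erase_union_eq (h : α → Finset α → ℝ) {t d : ℕ}
    (htd : t + d + 1 ≤ Fintype.card α) :
    doubleAvg (fun F S ↦ ∑ i ∈ F, (h i S - h i (F.erase i ∪ S))) t (d + 1) =
      (d + 1) * (pairAvg h t - pairAvg h (t + d)) := by
  rw [doubleAvg_eq, sum_sum_sum_sub_erase_union_eq, pairAvg, pairAvg]
  set n := Fintype.card α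
  have hD : (0 : ℝ) < (n - t).choose (d + 1) * n.choose t := by
    have := Nat.choose_pos (n := n - t) (k := d + 1) (by omega)
    have := Nat.choose_pos (n := n) (k := t) (by omega)
    positivity
  have hn : (0 : ℝ) < n := by exact_mod_cast (show 0 < n by omega)
  have hN₁ : (0 : ℝ) < n * (n - 1).choose t := by
    have := Nat.choose_pos (n := n - 1) (k := t) (by omega)
    positivity
  have hN₂ : (0 : ℝ) < n * (n - 1).choose (t + d) := by
    have := Nat.choose_pos (n := n - 1) (k := t + d) (by omega)
    positivity
  have e₁ : ((n - 1 - t).choose d : ℝ) = (d + 1) * ((n - t).choose (d + 1) * n.choose t)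
      / (n * (n - 1).choose t) :=
    eq_div_of_mul_eq hN₁.ne' (by exact_mod_cast choose_sub_one_sub_mul_mul_choose (by omega) d)
  have e₂ : ((t + d).choose t : ℝ) = (d + 1) * ((n - t).choose (d + 1) * n.choose t)
      / (n * (n - 1).choose (t + d)) :=
    eq_div_of_mul_eq hN₂.ne' (by exact_mod_cast choose_add_mul_mul_choose htd)
  rw [div_eq_iff hD.ne', e₁, e₂]
  field_simp

variable {f : Finset α → ℝ}

namespace IsSubmodular

lemma pairAvg_gain_add_le (hf : IsSubmodular f) (hmono : Monotone f) {t d : ℕ}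
    (htd : t + d + 1 ≤ Fintype.card α) : pairAvg (gain f) (t + d) ≤ pairAvg (gain f) t := by
  have h := doubleAvg_nonneg
    (c := fun F S ↦ ∑ i ∈ F, (gain f i S - gain f i (F.erase i ∪ S)))
    (fun F S ↦ sum_nonneg fun i _ ↦ sub_nonneg.2 (hf.gain_anti hmono subset_union_right i))
    t (d + 1)
  rw [doubleAvg_sum_sub_erase_union_eq _ htd] at h
  exact sub_nonneg.1 ((mul_nonneg_iff_of_pos_left (by positivity)).1 h)

theorem exists_doubleAvg_condTotalCorr_le (hf : IsSubmodular f) (hmono : Monotone f)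
    {M : ℝ} (hM : ∀ i, f {i} - f ∅ ≤ M) {k ℓ : ℕ} (hk : 1 ≤ k) (hℓ : 1 ≤ ℓ)
    (hkℓ : ℓ + k ≤ Fintype.card α) :
    ∃ t < ℓ, doubleAvg (condTotalCorr f) t k ≤ k ^ 2 * M / ℓ := by
  obtain ⟨d, rfl⟩ : ∃ d, k = d + 1 := ⟨k - 1, by omega⟩
  have : Nonempty α := Fintype.card_pos_iff.1 (by omega)
  have hgain : ∀ i, gain f i ∅ ≤ M := fun i ↦ by simpa [gain] using hM i
  have hM₀ : 0 ≤ M := (gain_nonneg hmono (Classical.arbitrary α) ∅).trans (hgain _)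
  have hφM : ∀ t < d, pairAvg (gain f) t ≤ M := fun t ht ↦ by
    simpa using (hf.pairAvg_gain_add_le hmono (t := 0) (d := t) (by omega)).trans
      (pairAvg_zero_le hgain)
  obtain ⟨t, htℓ, ht⟩ := exists_lt_sub_add_le hℓ (pairAvg_nonneg (gain_nonneg hmono)) hφM
  refine ⟨t, htℓ, ?_⟩
  calc doubleAvg (condTotalCorr f) t (d + 1)
      ≤ doubleAvg (fun F S ↦ ∑ i ∈ F, (gain f i S - gain f i (F.erase i ∪ S))) t (d + 1) :=
        doubleAvg_mono hf.condTotalCorr_le t (d + 1)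
    _ = (d + 1) * (pairAvg (gain f) t - pairAvg (gain f) (t + d)) :=
        doubleAvg_sum_sub_erase_union_eq _ (by omega)
    _ ≤ (d + 1) * (d * M / ℓ) := by gcongr
    _ ≤ ((d + 1 : ℕ) : ℝ) ^ 2 * M / ℓ := by
        rw [show ((d + 1 : ℕ) : ℝ) ^ 2 * M / ℓ = (d + 1) * ((d + 1) * M / ℓ) by push_cast; ring]
        gcongr
        linarith

end IsSubmodular

end Averages

section Entropy

open Real

variable {n : ℕ} {μ : (Fin n → Bool) → ℝ} {A B : Finset (Fin n)}

def proj (A : Finset (Fin n)) (x : Fin n → Bool) : Fin n → Bool :=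
  fun i ↦ if i ∈ A then x i else false

lemma proj_mem_reps (A : Finset (Fin n)) (x : Fin n → Bool) : proj A x ∈ reps A := by
  simp +contextual [reps, proj]

lemma mem_reps_and_agree_iff {x y : Fin n → Bool} :
    (y ∈ reps A ∧ ∀ i ∈ A, x i = y i) ↔ y = proj A x := by
  constructor
  · rintro ⟨hy, hxy⟩
    funext i
    by_cases hi : i ∈ A
    · simp [proj, hi, hxy i hi]
    · simp [proj, hi, (mem_filter.1 hy).2 i hi]
  · rintro rfl
    exact ⟨proj_mem_reps A x, fun i hi ↦ by simp [proj, hi]⟩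

lemma marg_congr {y y' : Fin n → Bool} (h : ∀ i ∈ A, y i = y' i) :
    marg μ A y = marg μ A y' := by
  unfold marg
  refine sum_congr rfl fun x _ ↦ ?_
  congr 1
  exact propext ⟨fun hx i hi ↦ (hx i hi).trans (h i hi),
    fun hx i hi ↦ (hx i hi).trans (h i hi).symm⟩

lemma marg_proj_of_subset (hAB : A ⊆ B) (x : Fin n → Bool) :
    marg μ A (proj B x) = marg μ A x :=
  marg_congr fun i hi ↦ by simp [proj, hAB hi]

lemma sum_reps_marg_mul (μ : (Fin n → Bool) → ℝ) (A : Finset (Fin n))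
    (g : (Fin n → Bool) → ℝ) :
    ∑ y ∈ reps A, marg μ A y * g y = ∑ x, μ x * g (proj A x) := by
  simp only [marg, sum_mul, ite_mul, zero_mul]
  rw [sum_comm]
  refine sum_congr rfl fun x _ ↦ ?_
  have hfilter : {y ∈ reps A | ∀ i ∈ A, x i = y i} = {proj A x} := by
    ext y
    rw [mem_filter, mem_singleton, mem_reps_and_agree_iff]
  rw [← sum_filter, hfilter, sum_singleton]

lemma margEnt_eq_sum (μ : (Fin n → Bool) → ℝ) (A : Finset (Fin n)) :
    margEnt μ A = -∑ x, μ x * log (marg μ A x) := by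
  rw [margEnt, sum_reps_marg_mul μ A fun y ↦ log (marg μ A y)]
  simp only [marg_proj_of_subset subset_rfl]

lemma margEnt_empty (hμ : ∑ x, μ x = 1) : margEnt μ ∅ = 0 := by
  simp [margEnt_eq_sum, marg, hμ]

lemma marg_nonneg (hμ : ∀ x, 0 ≤ μ x) (A : Finset (Fin n)) (y : Fin n → Bool) :
    0 ≤ marg μ A y :=
  sum_nonneg fun x _ ↦ by split_ifs <;> simp [hμ x]

lemma le_marg (hμ : ∀ x, 0 ≤ μ x) (A : Finset (Fin n)) (x : Fin n → Bool) :
    μ x ≤ marg μ A x := by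
  unfold marg
  simpa using single_le_sum (f := fun x' ↦ if ∀ i ∈ A, x' i = x i then μ x' else 0)
    (fun x' _ ↦ by split_ifs <;> simp [hμ x']) (mem_univ x)

lemma marg_anti (hμ : ∀ x, 0 ≤ μ x) (hAB : A ⊆ B) (x : Fin n → Bool) :
    marg μ B x ≤ marg μ A x :=
  sum_le_sum fun x' _ ↦ by
    by_cases hB : ∀ i ∈ B, x' i = x i
    · rw [if_pos hB, if_pos fun i hi ↦ hB i (hAB hi)]
    · rw [if_neg hB]
      split_ifs <;> simp [hμ x']

lemma margEnt_monotone (hμ : ∀ x, 0 ≤ μ x) : Monotone (margEnt μ) := by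
  intro A B hAB
  simp only [margEnt_eq_sum, neg_le_neg_iff]
  refine sum_le_sum fun x _ ↦ ?_
  rcases (hμ x).eq_or_lt with h | h
  · simp [← h]
  · exact mul_le_mul_of_nonneg_left
      (log_le_log (h.trans_le (le_marg hμ B x)) (marg_anti hμ hAB x)) h.le

lemma margEnt_le_log_card (hμ : IsDist μ) (A : Finset (Fin n)) :
    margEnt μ A ≤ log #(reps A) := by
  have hN : (0 : ℝ) < #(reps A) := by
    exact_mod_cast card_pos.2 ⟨_, proj_mem_reps A fun _ ↦ false⟩
  have hsum : ∑ y ∈ reps A, marg μ A y = 1 := by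
    simpa [hμ.2] using sum_reps_marg_mul μ A 1
  have hjensen := concaveOn_negMulLog.le_map_sum (t := reps A)
    (w := fun _ ↦ (#(reps A) : ℝ)⁻¹) (p := marg μ A) (fun _ _ ↦ by positivity)
    (by simp [hN.ne']) (fun y _ ↦ marg_nonneg hμ.1 A y)
  simp only [smul_eq_mul, ← mul_sum, hsum, mul_one] at hjensen
  rw [negMulLog, log_inv, mul_neg, neg_mul, neg_neg,
    mul_le_mul_iff_right₀ (inv_pos.2 hN)] at hjensen
  simpa [margEnt, negMulLog, sum_neg_distrib] using hjensen

lemma card_reps_singleton_le (i : Fin n) : #(reps {i}) ≤ 2 := by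
  calc #(reps {i}) ≤ #(univ.image fun b : Bool ↦ proj {i} fun _ ↦ b) :=
        card_le_card fun y hy ↦ mem_image.2
          ⟨y i, mem_univ _, (mem_reps_and_agree_iff.1 ⟨hy, by simp⟩).symm⟩
    _ ≤ 2 := card_image_le.trans (by simp)

lemma margEnt_singleton_le (hμ : IsDist μ) (i : Fin n) : margEnt μ {i} ≤ log 2 :=
  (margEnt_le_log_card hμ {i}).trans (log_le_log
    (by exact_mod_cast card_pos.2 ⟨_, proj_mem_reps {i} fun _ ↦ false⟩)
    (by exact_mod_cast card_reps_singleton_le i))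

lemma sum_reps_union_agree (x w : Fin n → Bool) :
    ∑ z ∈ reps (A ∪ B), (if (∀ i ∈ A, x i = z i) ∧ ∀ i ∈ B, w i = z i then (1 : ℝ) else 0) =
      if ∀ i ∈ A ∩ B, w i = x i then 1 else 0 := by
  rw [sum_boole]
  split_ifs with hxw
  · let z₀ : Fin n → Bool := fun i ↦ if i ∈ A then x i else proj B w i
    suffices {z ∈ reps (A ∪ B) | (∀ i ∈ A, x i = z i) ∧ ∀ i ∈ B, w i = z i} = {z₀} by
      rw [this, card_singleton, Nat.cast_one]
    ext z
    simp only [mem_filter, mem_singleton, reps, mem_univ, true_and, mem_union, not_or]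
    constructor
    · rintro ⟨hz, hzA, hzB⟩
      funext i
      by_cases hA : i ∈ A
      · simp [z₀, hA, hzA i hA]
      by_cases hB : i ∈ B
      · simp [z₀, proj, hA, hB, hzB i hB]
      · simp [z₀, proj, hA, hB, hz i ⟨hA, hB⟩]
    · rintro rfl
      refine ⟨fun i hi ↦ ?_, fun i hi ↦ by simp [z₀, hi], fun i hi ↦ ?_⟩
      · simp [z₀, proj, hi.1, hi.2]
      · by_cases hA : i ∈ A
        · simp [z₀, hA, hxw i (mem_inter.2 ⟨hA, hi⟩)]
        · simp [z₀, proj, hA, hi]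
  · rw [Nat.cast_eq_zero, card_eq_zero, filter_eq_empty_iff]
    rintro z - ⟨hzA, hzB⟩
    exact hxw fun i hi ↦ (hzB i (mem_inter.1 hi).2).trans (hzA i (mem_inter.1 hi).1).symm

lemma sum_reps_union_ite_marg (x : Fin n → Bool) :
    ∑ z ∈ reps (A ∪ B), (if ∀ i ∈ A, x i = z i then marg μ B z else 0) = marg μ (A ∩ B) x := by
  calc _ = ∑ z ∈ reps (A ∪ B), ∑ w, μ w *
        (if (∀ i ∈ A, x i = z i) ∧ ∀ i ∈ B, w i = z i then 1 else 0) := by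
        refine sum_congr rfl fun z _ ↦ ?_
        by_cases hxz : ∀ i ∈ A, x i = z i
        · simp [eq_true hxz, marg]
        · simp [eq_false hxz]
    _ = ∑ w, μ w * (if ∀ i ∈ A ∩ B, w i = x i then 1 else 0) := by
        rw [sum_comm]
        simp_rw [← mul_sum, sum_reps_union_agree]
    _ = marg μ (A ∩ B) x := by simp [marg]

lemma sum_reps_union_marg_mul_div_eq (hμ : IsDist μ) (A B : Finset (Fin n)) :
    ∑ z ∈ reps (A ∪ B), marg μ A z * marg μ B z / marg μ (A ∩ B) z = 1 := by
  have hexpand : ∀ z, marg μ A z * marg μ B z / marg μ (A ∩ B) z =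
      ∑ x, μ x / marg μ (A ∩ B) x * (if ∀ i ∈ A, x i = z i then marg μ B z else 0) := by
    intro z
    rw [marg, sum_mul, sum_div]
    refine sum_congr rfl fun x _ ↦ ?_
    split_ifs with hxz
    · rw [marg_congr (A := A ∩ B) fun i hi ↦ (hxz i (mem_inter.1 hi).1).symm]
      ring
    · simp
  simp_rw [hexpand]
  rw [sum_comm]
  simp_rw [← mul_sum, sum_reps_union_ite_marg]
  rw [← hμ.2]
  refine sum_congr rfl fun x _ ↦ div_mul_cancel_of_imp fun h ↦ ?_
  exact le_antisymm (h ▸ le_marg hμ.1 _ x) (hμ.1 x)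

lemma sum_mul_marg_ratio_le_one (hμ : IsDist μ) (A B : Finset (Fin n)) :
    ∑ x, μ x * (marg μ A x * marg μ B x / (marg μ (A ∪ B) x * marg μ (A ∩ B) x)) ≤ 1 := by
  set r : (Fin n → Bool) → ℝ := fun x ↦
    marg μ A x * marg μ B x / (marg μ (A ∪ B) x * marg μ (A ∩ B) x)
  calc ∑ x, μ x * r x = ∑ x, μ x * r (proj (A ∪ B) x) := by
        simp only [r, marg_proj_of_subset subset_union_left, marg_proj_of_subset
          subset_union_right, marg_proj_of_subset subset_rfl,
          marg_proj_of_subset inter_subset_union]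
    _ = ∑ z ∈ reps (A ∪ B), marg μ (A ∪ B) z * r z := (sum_reps_marg_mul μ _ r).symm
    _ ≤ ∑ z ∈ reps (A ∪ B), marg μ A z * marg μ B z / marg μ (A ∩ B) z := by
        refine sum_le_sum fun z _ ↦ ?_
        rcases eq_or_ne (marg μ (A ∪ B) z) 0 with h | h
        · rw [h, zero_mul]
          have := marg_nonneg hμ.1 A z
          have := marg_nonneg hμ.1 B z
          have := marg_nonneg hμ.1 (A ∩ B) z
          positivity
        · rw [← mul_div_assoc, mul_div_mul_left _ _ h]
    _ = 1 := sum_reps_union_marg_mul_div_eq hμ A B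

lemma log_add_log_le {a b c d : ℝ} (ha : 0 < a) (hb : 0 < b) (hc : 0 < c) (hd : 0 < d) :
    log a + log b ≤ log c + log d + (a * b / (c * d) - 1) := by
  have h := log_le_sub_one_of_pos (show 0 < a * b / (c * d) by positivity)
  rw [log_div (by positivity) (by positivity), log_mul ha.ne' hb.ne', log_mul hc.ne' hd.ne'] at h
  linarith

theorem margEnt_isSubmodular (hμ : IsDist μ) : IsSubmodular (margEnt μ) := by
  intro A B
  have hpoint : ∀ x, μ x * (log (marg μ A x) + log (marg μ B x)) ≤
      μ x * (log (marg μ (A ∪ B) x) + log (marg μ (A ∩ B) x)) +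
        μ x * (marg μ A x * marg μ B x / (marg μ (A ∪ B) x * marg μ (A ∩ B) x) - 1) := by
    intro x
    rcases (hμ.1 x).eq_or_lt with h | h
    · simp [← h]
    · have hU := h.trans_le (le_marg hμ.1 (A ∪ B) x)
      rw [← mul_add]
      exact mul_le_mul_of_nonneg_left (log_add_log_le
        (hU.trans_le (marg_anti hμ.1 subset_union_left x))
        (hU.trans_le (marg_anti hμ.1 subset_union_right x)) hU
        (hU.trans_le (marg_anti hμ.1 inter_subset_union x))) h.le
  have hsum := sum_le_sum fun x (_ : x ∈ univ) ↦ hpoint x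
  simp only [mul_add, mul_sub, mul_one, sum_add_distrib, sum_sub_distrib, hμ.2] at hsum
  simp only [margEnt_eq_sum]
  linarith [sum_mul_marg_ratio_le_one hμ A B]

end Entropy

end CorrelationRounding

open CorrelationRounding

theorem correlation_rounding_complement_general {n : ℕ} (μ : (Fin n → Bool) → ℝ) (hμ : IsDist μ)
    (k ℓ : ℕ) (hk1 : 1 ≤ k) (hl1 : 1 ≤ ℓ) :
    ∃ t ≤ ℓ,
      (∑ S ∈ Finset.powersetCard t (Finset.univ : Finset (Fin n)),
          (∑ F ∈ Finset.powersetCard k ((Finset.univ : Finset (Fin n)) \ S), condTC μ F S)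
            / ((n - t).choose k : ℝ)) / (n.choose t : ℝ)
        ≤ (k : ℝ) ^ 2 * Real.log 2 / (ℓ : ℝ) := by
  by_cases hkℓ : ℓ + k ≤ n
  · have hH : ∀ i, margEnt μ {i} - margEnt μ ∅ ≤ Real.log 2 := fun i ↦ by
      rw [margEnt_empty hμ.2, sub_zero]
      exact margEnt_singleton_le hμ i
    obtain ⟨t, htℓ, ht⟩ := (margEnt_isSubmodular hμ).exists_doubleAvg_condTotalCorr_le
      (margEnt_monotone hμ.1) hH hk1 hl1 (by rwa [Fintype.card_fin])
    rw [doubleAvg, Fintype.card_fin] at ht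
    exact ⟨t, htℓ.le, ht⟩
  · have h0 := doubleAvg_eq_zero_of_card_lt (condTotalCorr (margEnt μ)) (t := n - k + 1) (k := k)
      (by rw [Fintype.card_fin]; omega)
    rw [doubleAvg, Fintype.card_fin] at h0
    exact ⟨n - k + 1, by omega, h0.trans_le (by positivity)⟩

/-- Correlation rounding (restricted form): for `k, ℓ ∈ [n]` there is `t ≤ ℓ` with
`E_{S ∼ (V choose t)} E_{F ∼ ((V∖S) choose k)} [C(X_F | X_S)] ≤ k² log 2 / ℓ`. -/
theorem correlation_rounding_complement {n : ℕ} (μ : (Fin n → Bool) → ℝ) (hμ : IsDist μ)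
    (k ℓ : ℕ) (hk1 : 1 ≤ k) (hkn : k ≤ n) (hl1 : 1 ≤ ℓ) (hln : ℓ ≤ n) :
    ∃ t ≤ ℓ,
      (∑ S ∈ Finset.powersetCard t (Finset.univ : Finset (Fin n)),
          (∑ F ∈ Finset.powersetCard k ((Finset.univ : Finset (Fin n)) \ S), condTC μ F S)
            / ((n - t).choose k : ℝ)) / (n.choose t : ℝ)
        ≤ (k : ℝ) ^ 2 * Real.log 2 / (ℓ : ℝ) :=
  correlation_rounding_complement_general μ hμ k ℓ hk1 hl1
end
end

section
/- Let X_1,…,X_n be arbitrary jointly distributed real random variables with finite second moments, and let J be a real symmetric n×n matrix with zero diagonal with rows J_1,…,J_n. Then (1/n) Σ_{i=1}^n Var(J_i · X) ≤ ‖J‖_{s4}² · sqrt(E_{j,k}[Cov(X_j, X_k)²]), where E_{j,k} denotes the average over all n² ordered pairs (j,k) ∈ [n]× [n], and ‖J‖_{s4} = sqrt(‖JᵀJ‖_F) is the Schatten 4-norm. -/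
open Finset MeasureTheory

noncomputable section

/-- Covariance of two real random variables: `Cov(f,g) = E[fg] − E[f]E[g]`. -/
def cov {Ω : Type*} [MeasurableSpace Ω] (μ : Measure Ω) (f g : Ω → ℝ) : ℝ :=
  (∫ ω, f ω * g ω ∂μ) - (∫ ω, f ω ∂μ) * (∫ ω, g ω ∂μ)

/-!
Each local field `J_i · X` is a linear combination of the `X_j`, so bilinearity of the covariance
gives `∑_i Var(J_i · X) = ∑_{j,k} (JᵀJ)_{jk} Cov(X_j, X_k)`, the Frobenius inner product of `JᵀJ`
with the covariance matrix. Cauchy–Schwarz bounds it by `‖JᵀJ‖_F · ‖Cov‖_F`.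
-/

theorem integral_sum_const_mul {Ω ι : Type*} [MeasurableSpace Ω] [Fintype ι] (μ : Measure Ω)
    (c : ι → ℝ) (f : ι → Ω → ℝ) (hf : ∀ i, Integrable (f i) μ) :
    ∫ ω, ∑ i, c i * f i ω ∂μ = ∑ i, c i * ∫ ω, f i ω ∂μ := by
  rw [integral_finsetSum _ fun i _ => (hf i).const_mul _]
  simp only [integral_const_mul]

theorem cov_sum_mul_sum {Ω ι κ : Type*} [MeasurableSpace Ω] [Fintype ι] [Fintype κ]
    (μ : Measure Ω) (f : ι → Ω → ℝ) (g : κ → Ω → ℝ) (a : ι → ℝ) (b : κ → ℝ)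
    (hf : ∀ i, Integrable (f i) μ) (hg : ∀ j, Integrable (g j) μ)
    (hfg : ∀ i j, Integrable (fun ω => f i ω * g j ω) μ) :
    cov μ (fun ω => ∑ i, a i * f i ω) (fun ω => ∑ j, b j * g j ω)
      = ∑ i, ∑ j, a i * b j * cov μ (f i) (g j) := by
  have integral_prod : ∫ ω, (∑ i, a i * f i ω) * (∑ j, b j * g j ω) ∂μ
      = ∑ i, ∑ j, a i * b j * ∫ ω, f i ω * g j ω ∂μ := by
    have expand : ∀ ω, (∑ i, a i * f i ω) * (∑ j, b j * g j ω)
        = ∑ i, a i * ∑ j, b j * (f i ω * g j ω) := fun ω => by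
      rw [sum_mul_sum]
      simp only [mul_sum]
      exact sum_congr rfl fun i _ => sum_congr rfl fun j _ => by ring
    simp_rw [expand]
    rw [integral_sum_const_mul _ _ _ fun i => integrable_finsetSum _ fun j _ =>
      (hfg i j).const_mul _]
    refine sum_congr rfl fun i _ => ?_
    rw [integral_sum_const_mul _ _ _ (hfg i), mul_sum]
    exact sum_congr rfl fun j _ => by ring
  rw [cov, integral_prod, integral_sum_const_mul _ _ _ hf, integral_sum_const_mul _ _ _ hg,
    sum_mul_sum, ← sum_sub_distrib]
  refine sum_congr rfl fun i _ => ?_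
  rw [← sum_sub_distrib]
  exact sum_congr rfl fun j _ => by rw [cov]; ring

theorem Matrix.sum_sum_sum_mul_mul_eq_sum_sum_transpose_mul_mul {m n R : Type*} [Fintype m]
    [Fintype n] [CommSemiring R] (J : Matrix m n R) (C : n → n → R) :
    ∑ i, ∑ j, ∑ k, J i j * J i k * C j k = ∑ j, ∑ k, (J.transpose * J) j k * C j k := by
  simp_rw [Matrix.mul_apply, Matrix.transpose_apply, sum_mul]
  rw [sum_comm]
  exact sum_congr rfl fun j _ => sum_comm

theorem Real.sum_sum_mul_le_sqrt_mul_sqrt {ι κ : Type*} [Fintype ι] [Fintype κ]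
    (A B : ι → κ → ℝ) :
    ∑ i, ∑ j, A i j * B i j ≤ √(∑ i, ∑ j, A i j ^ 2) * √(∑ i, ∑ j, B i j ^ 2) := by
  simpa only [Fintype.sum_prod_type] using
    Real.sum_mul_le_sqrt_mul_sqrt univ (fun p : ι × κ => A p.1 p.2) (fun p => B p.1 p.2)

theorem avg_local_field_variance_bound_general {n : ℕ} {Ω : Type*} [MeasurableSpace Ω]
    (μ : Measure Ω) [IsProbabilityMeasure μ]
    (X : Fin n → Ω → ℝ) (hX : ∀ i, MemLp (X i) 2 μ)
    (J : Matrix (Fin n) (Fin n) ℝ) :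
    (1 / n : ℝ) * ∑ i : Fin n,
        cov μ (fun ω => ∑ j : Fin n, J i j * X j ω) (fun ω => ∑ j : Fin n, J i j * X j ω)
      ≤ Real.sqrt (∑ i : Fin n, ∑ j : Fin n, ((J.transpose * J) i j) ^ 2) *
          Real.sqrt ((∑ j : Fin n, ∑ k : Fin n, (cov μ (X j) (X k)) ^ 2) / (n : ℝ) ^ 2) := by
  have hint : ∀ j, Integrable (X j) μ := fun j => (hX j).integrable one_le_two
  have hmul : ∀ j k, Integrable (fun ω => X j ω * X k ω) μ := fun j k =>
    (hX j).integrable_mul (hX k)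
  have sum_var : ∑ i, cov μ (fun ω => ∑ j, J i j * X j ω) (fun ω => ∑ j, J i j * X j ω)
      = ∑ j, ∑ k, (J.transpose * J) j k * cov μ (X j) (X k) := by
    simp_rw [cov_sum_mul_sum μ X X _ _ hint hint hmul]
    exact J.sum_sum_sum_mul_mul_eq_sum_sum_transpose_mul_mul _
  have sqrt_mean : √((∑ j, ∑ k, cov μ (X j) (X k) ^ 2) / (n : ℝ) ^ 2)
      = √(∑ j, ∑ k, cov μ (X j) (X k) ^ 2) / n := by
    rw [Real.sqrt_div' _ (by positivity), Real.sqrt_sq n.cast_nonneg]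
  rw [sum_var, sqrt_mean, mul_div_assoc', one_div_mul_eq_div]
  gcongr
  exact Real.sum_sum_mul_le_sqrt_mul_sqrt _ _

/-- The average variance of the local fields `J_i · X` is bounded via the Schatten 4-norm:
`(1/n)∑_i Var(J_i · X) ≤ ‖J‖_{s4}² sqrt(E_{j,k}[Cov(X_j,X_k)²])`,
where `‖J‖_{s4}² = ‖JᵀJ‖_F` and `E_{j,k}` averages over all `n²` ordered pairs. -/
theorem avg_local_field_variance_bound {n : ℕ} {Ω : Type*} [MeasurableSpace Ω]
    (μ : Measure Ω) [IsProbabilityMeasure μ]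
    (X : Fin n → Ω → ℝ) (hX : ∀ i, MemLp (X i) 2 μ)
    (J : Matrix (Fin n) (Fin n) ℝ) (hsym : J.IsSymm) (hdiag : ∀ i, J i i = 0) :
    (1 / n : ℝ) * ∑ i : Fin n,
        cov μ (fun ω => ∑ j : Fin n, J i j * X j ω) (fun ω => ∑ j : Fin n, J i j * X j ω)
      ≤ Real.sqrt (∑ i : Fin n, ∑ j : Fin n, ((J.transpose * J) i j) ^ 2) *
          Real.sqrt ((∑ j : Fin n, ∑ k : Fin n, (cov μ (X j) (X k)) ^ 2) / (n : ℝ) ^ 2) :=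
  avg_local_field_variance_bound_general μ X hX J

end
end
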